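/- arXiv:2001.11234 — 2 statements merged into one kernel-verified Lean document; each statement's English description precedes it below -/
import Mathlib

section
/- Let V : [t₀, ∞) → ℝ be a nonnegative, continuously differentiable function satisfying V'(t) ≤ -c √(V(t)) for some constant c > 0 whenever V(t) > 0. Then V(t) = 0 for all t ≥ t₀ + 2√(V(t₀))/c. -/
/-!
Where `V > 0` the hypothesis makes `V` decrease, and where `V = 0` the nonnegative `V` has a
minimum, so `V' = 0`; hence `V` is antitone and stays at zero once it gets there. As long as
`V > 0`, the chain rule gives `(√V)' = V' / (2√V) ≤ -c/2`, so `√V(t) ≤ √V(t₀) - (c/2)(t - t₀)`,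
which forbids `V > 0` at `t = t₀ + 2√V(t₀)/c`.
-/

open Set

theorem antitoneOn_of_nonneg_of_deriv_nonpos_of_pos {D : Set ℝ} (hD : Convex ℝ D) {V : ℝ → ℝ}
    (hcont : ContinuousOn V D) (hdiff : DifferentiableOn ℝ V (interior D))
    (hnonneg : ∀ x ∈ D, 0 ≤ V x) (hderiv : ∀ x ∈ interior D, 0 < V x → deriv V x ≤ 0) :
    AntitoneOn V D := by
  refine antitoneOn_of_deriv_nonpos hD hcont hdiff fun x hx => ?_
  rcases (hnonneg x (interior_subset hx)).eq_or_lt with hzero | hpos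
  · have hmin : IsLocalMin V x :=
      Filter.mem_of_superset (isOpen_interior.mem_nhds hx) fun y hy =>
        hzero ▸ hnonneg y (interior_subset hy)
    exact hmin.deriv_eq_zero.le
  · exact hderiv x hx hpos

theorem sqrt_le_sqrt_sub_of_deriv_le_neg_mul_sqrt {a b c : ℝ} (hab : a ≤ b) {V : ℝ → ℝ}
    (hcont : ContinuousOn V (Icc a b)) (hdiff : DifferentiableOn ℝ V (Ioo a b))
    (hpos : ∀ x ∈ Ioo a b, 0 < V x) (hderiv : ∀ x ∈ Ioo a b, deriv V x ≤ -c * √(V x)) :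
    √(V b) ≤ √(V a) - c / 2 * (b - a) := by
  set g : ℝ → ℝ := fun t => √(V t) + c / 2 * t
  have hg_deriv : ∀ x ∈ Ioo a b, HasDerivAt g (deriv V x / (2 * √(V x)) + c / 2) x := fun x hx =>
    ((hdiff.differentiableAt (isOpen_Ioo.mem_nhds hx)).hasDerivAt.sqrt (hpos x hx).ne').add
      ((hasDerivAt_id x).const_mul (c / 2) |>.congr_deriv (mul_one _))
  have hg_anti : AntitoneOn g (Icc a b) := by
    refine antitoneOn_of_deriv_nonpos (convex_Icc a b)
      ((hcont.sqrt).add (continuousOn_const.mul continuousOn_id)) ?_ ?_ <;> rw [interior_Icc]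
    · exact fun x hx => (hg_deriv x hx).differentiableAt.differentiableWithinAt
    · intro x hx
      have hsqrt : 0 < √(V x) := Real.sqrt_pos.mpr (hpos x hx)
      rw [(hg_deriv x hx).deriv, div_add' _ _ _ (by positivity)]
      apply div_nonpos_of_nonpos_of_nonneg _ (by positivity)
      nlinarith [hderiv x hx]
  have := hg_anti (left_mem_Icc.mpr hab) (right_mem_Icc.mpr hab) hab
  simp only [g] at this
  linarith

/-- If V : [t₀,∞) → ℝ is nonnegative and continuously differentiable with
V'(t) ≤ -c √(V(t)) (c > 0) whenever V(t) > 0, then V(t) = 0 for all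
t ≥ t₀ + 2√(V(t₀))/c. -/
theorem stmt14 (t₀ c : ℝ) (hc : 0 < c) (V : ℝ → ℝ)
    (hVnonneg : ∀ t, t₀ ≤ t → 0 ≤ V t)
    (hVdiff : ContDiffOn ℝ 1 V (Set.Ici t₀))
    (hV' : ∀ t, t₀ ≤ t → 0 < V t → derivWithin V (Set.Ici t₀) t ≤ -c * Real.sqrt (V t)) :
    ∀ t, t₀ + 2 * Real.sqrt (V t₀) / c ≤ t → V t = 0 := by
  have hdiff : DifferentiableOn ℝ V (Ioi t₀) :=
    (hVdiff.differentiableOn one_ne_zero).mono Ioi_subset_Ici_self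
  have hderiv : ∀ t ∈ Ioi t₀, 0 < V t → deriv V t ≤ -c * √(V t) := fun t ht hVt => by
    rw [← derivWithin_of_mem_nhds (Ici_mem_nhds ht)]
    exact hV' t ht.le hVt
  have hanti : AntitoneOn V (Ici t₀) := by
    refine antitoneOn_of_nonneg_of_deriv_nonpos_of_pos (convex_Ici t₀) hVdiff.continuousOn
      (by rwa [interior_Ici]) hVnonneg ?_
    rw [interior_Ici]
    exact fun t ht hVt => (hderiv t ht hVt).trans (by nlinarith [Real.sqrt_nonneg (V t)])
  set T := t₀ + 2 * √(V t₀) / c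
  have hT : t₀ ≤ T := le_add_of_nonneg_right (by positivity)
  have hVT : V T = 0 := by
    by_contra hne
    have hpos : ∀ x ∈ Ioo t₀ T, 0 < V x := fun x hx =>
      ((hVnonneg T hT).lt_of_ne' hne).trans_le (hanti hx.1.le hT hx.2.le)
    have hsqrt := sqrt_le_sqrt_sub_of_deriv_le_neg_mul_sqrt hT
      (hVdiff.continuousOn.mono Icc_subset_Ici_self) (hdiff.mono Ioo_subset_Ioi_self) hpos
      fun x hx => hderiv x hx.1 (hpos x hx)
    have hshift : c / 2 * (T - t₀) = √(V t₀) := by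
      rw [show T - t₀ = 2 * √(V t₀) / c by ring]
      field_simp
    rw [hshift, sub_self] at hsqrt
    exact hne <| (Real.sqrt_eq_zero (hVnonneg T hT)).mp (hsqrt.antisymm (Real.sqrt_nonneg _))
  intro t ht
  exact (hVT ▸ hanti hT (hT.trans ht) ht).antisymm (hVnonneg t (hT.trans ht))
end

section
/- Let L be the Laplacian of a connected undirected graph on n vertices and x̃ : [t₀,∞) → ℝⁿ an absolutely continuous trajectory with 𝟏ₙᵀx̃(t) = 0 for all t, satisfying (d/dt)(½‖x̃(t)‖²) ≤ -√(2 x̃(t)ᵀ L x̃(t)) for almost every t. Then x̃(t) = 0 for all t ≥ t₀ + ‖x̃(t₀)‖₂ / √(λ₂(L)). -/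
/-!
With `V = ½‖x̃‖²`, the constraint `𝟏ᵀx̃ = 0` puts `x̃` orthogonal to `ker L = span 𝟏`, so expanding
in an orthonormal eigenbasis of `L` gives `x̃ᵀLx̃ ≥ λ₂‖x̃‖² = 2λ₂V`, hence `V' ≤ -2√λ₂ √V`.
Thus `√V` decreases at rate at least `√λ₂` for as long as it is positive, and fencing it below
the line `√V(t₀) - √λ₂ (t - t₀)` forces `V` to vanish by time `t₀ + √V(t₀)/√λ₂`, after which the
nonincreasing, nonnegative `V` stays zero.
-/

open Matrix MeasureTheory

/-- The second-smallest eigenvalue (algebraic connectivity) of the Laplacian of a connected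
graph: the smallest nonzero eigenvalue. -/
noncomputable def lambda2 {n : ℕ} {A : Matrix (Fin n) (Fin n) ℝ} (hA : A.IsHermitian) : ℝ :=
  sInf {μ : ℝ | μ ≠ 0 ∧ ∃ i, hA.eigenvalues i = μ}

open Filter Topology Set

lemma OrthonormalBasis.dotProduct_eq_sum {ι m : Type*} [Fintype ι] [Fintype m]
    (b : OrthonormalBasis ι ℝ (EuclideanSpace ℝ m)) (x y : m → ℝ) :
    x ⬝ᵥ y = ∑ i, (⇑(b i) ⬝ᵥ x) * (⇑(b i) ⬝ᵥ y) := by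
  have := (b.sum_inner_mul_inner (WithLp.toLp 2 x) (WithLp.toLp 2 y)).symm
  simp only [EuclideanSpace.inner_eq_star_dotProduct, star_trivial] at this
  rw [dotProduct_comm, this]
  exact Finset.sum_congr rfl fun i _ => by rw [dotProduct_comm y]

namespace Matrix.IsHermitian

variable {n : ℕ} {A : Matrix (Fin n) (Fin n) ℝ} (hA : A.IsHermitian)

lemma finite_setOf_ne_zero_eigenvalues :
    {μ : ℝ | μ ≠ 0 ∧ ∃ i, hA.eigenvalues i = μ}.Finite :=
  (Set.finite_range hA.eigenvalues).subset fun _ hμ => hμ.2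

lemma lambda2_le_eigenvalues {i : Fin n} (hi : hA.eigenvalues i ≠ 0) :
    lambda2 hA ≤ hA.eigenvalues i :=
  csInf_le hA.finite_setOf_ne_zero_eigenvalues.bddBelow ⟨hi, i, rfl⟩

lemma lambda2_pos (hpsd : A.PosSemidef) (hA0 : A ≠ 0) : 0 < lambda2 hA := by
  obtain ⟨i, hi⟩ : ∃ i, hA.eigenvalues i ≠ 0 :=
    Function.ne_iff.mp (mt hA.eigenvalues_eq_zero_iff.mp hA0)
  unfold lambda2
  obtain ⟨hne, j, hj⟩ :=
    Set.Nonempty.csInf_mem (by exact ⟨_, hi, i, rfl⟩) hA.finite_setOf_ne_zero_eigenvalues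
  rw [← hj] at hne ⊢
  exact (hpsd.eigenvalues_nonneg j).lt_of_ne' hne

lemma dotProduct_eigenvectorBasis_mulVec (i : Fin n) (x : Fin n → ℝ) :
    ⇑(hA.eigenvectorBasis i) ⬝ᵥ (A *ᵥ x) = hA.eigenvalues i * (⇑(hA.eigenvectorBasis i) ⬝ᵥ x) := by
  rw [dotProduct_mulVec, ← mulVec_transpose, (isHermitian_iff_isSymm.mp hA).eq,
    mulVec_eigenvectorBasis, smul_dotProduct, smul_eq_mul]

lemma lambda2_mul_dotProduct_self_le {x : Fin n → ℝ}
    (hx : ∀ y, A *ᵥ y = 0 → y ⬝ᵥ x = 0) :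
    lambda2 hA * (x ⬝ᵥ x) ≤ x ⬝ᵥ (A *ᵥ x) := by
  rw [hA.eigenvectorBasis.dotProduct_eq_sum, hA.eigenvectorBasis.dotProduct_eq_sum, Finset.mul_sum]
  refine Finset.sum_le_sum fun i _ => ?_
  rw [hA.dotProduct_eigenvectorBasis_mulVec]
  by_cases hi : hA.eigenvalues i = 0
  · have : ⇑(hA.eigenvectorBasis i) ⬝ᵥ x = 0 :=
      hx _ (by rw [mulVec_eigenvectorBasis, hi, zero_smul])
    simp [this]
  · calc lambda2 hA * _ ≤ hA.eigenvalues i * _ :=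
          mul_le_mul_of_nonneg_right (hA.lambda2_le_eigenvalues hi) (mul_self_nonneg _)
      _ = _ := by ring

end Matrix.IsHermitian

namespace SimpleGraph

variable {V : Type*} [Fintype V] [DecidableEq V] (G : SimpleGraph V) [DecidableRel G.Adj]

lemma lapMatrix_ne_zero [Nontrivial V] (hG : G.Preconnected) : G.lapMatrix ℝ ≠ 0 := by
  obtain ⟨v⟩ := ‹Nontrivial V›.to_nonempty
  obtain ⟨w, hvw⟩ := hG.exists_adj_of_nontrivial v
  intro h
  have := congr_fun₂ h v w
  simp [lapMatrix, degMatrix, hvw.ne, hvw] at this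

lemma dotProduct_eq_zero_of_lapMatrix_mulVec_eq_zero (hG : G.Connected) {x y : V → ℝ}
    (hx : ∑ i, x i = 0) (hy : G.lapMatrix ℝ *ᵥ y = 0) : y ⬝ᵥ x = 0 := by
  obtain ⟨v⟩ := hG.nonempty
  have hconst : ∀ j, y j = y v :=
    fun j => (lapMatrix_mulVec_eq_zero_iff_forall_reachable G).mp hy j v (hG.preconnected j v)
  simp only [dotProduct, hconst, ← Finset.mul_sum, hx, mul_zero]

end SimpleGraph

lemma intervalIntegral.integral_le_mul_sub_of_ae_le {f : ℝ → ℝ} {a b K : ℝ} (hab : a ≤ b)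
    (hf : IntervalIntegrable f volume a b) (h : ∀ᵐ t, t ∈ Icc a b → f t ≤ K) :
    ∫ t in a..b, f t ≤ K * (b - a) :=
  calc ∫ t in a..b, f t ≤ ∫ _ in a..b, K :=
        integral_mono_ae_restrict hab hf intervalIntegrable_const
          ((ae_restrict_iff' measurableSet_Icc).mpr h)
    _ = K * (b - a) := by rw [integral_const, smul_eq_mul, mul_comm]

lemma eventually_slope_sqrt_lt {V : ℝ → ℝ} {x c r : ℝ} (hV : ContinuousWithinAt V (Ioi x) x)
    (hx : 0 < V x) (hdecay : ∀ z, x < z → V z - V x ≤ -(2 * c * √(V z)) * (z - x))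
    (hr : -c < r) : ∀ᶠ z in 𝓝[>] x, slope (fun t => √(V t)) x z < r := by
  have hsx : 0 < √(V x) := Real.sqrt_pos.2 hx
  have hlim : Tendsto (fun z => -(2 * c * √(V z)) / (√(V z) + √(V x))) (𝓝[>] x) (𝓝 (-c)) := by
    have hw : Tendsto (fun z => √(V z)) (𝓝[>] x) (𝓝 (√(V x))) := hV.sqrt
    have h := ((hw.const_mul (2 * c)).neg).div (hw.add_const (√(V x))) (by positivity)
    rwa [show -(2 * c * √(V x)) / (√(V x) + √(V x)) = -c by field_simp; ring] at h
  filter_upwards [hlim (gt_mem_nhds hr), hV.eventually (lt_mem_nhds hx), self_mem_nhdsWithin]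
    with z hzr hVz hxz
  refine lt_of_le_of_lt ?_ hzr
  have hsz : 0 < √(V z) := Real.sqrt_pos.2 hVz
  rw [slope_def_field, div_le_div_iff₀ (sub_pos.2 hxz) (by positivity)]
  nlinarith [hdecay z hxz, Real.sq_sqrt hVz.le, Real.sq_sqrt hx.le]

section FiniteTimeExtinction

variable {V v' : ℝ → ℝ} {t₀ c : ℝ}

lemma antitoneOn_of_integral_le_neg_sqrt (hc : 0 ≤ c)
    (hint : ∀ a b : ℝ, IntervalIntegrable v' volume a b)
    (hFTC : ∀ a b : ℝ, t₀ ≤ a → a ≤ b → V b - V a = ∫ t in a..b, v' t)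
    (hb : ∀ᵐ t, t₀ ≤ t → v' t ≤ -(2 * c * √(V t))) :
    AntitoneOn V (Ici t₀) := by
  intro a ha b _ hab
  have := intervalIntegral.integral_le_mul_sub_of_ae_le hab (hint a b) (K := 0) <| by
    filter_upwards [hb] with t ht hmem
    exact (ht (le_trans ha hmem.1)).trans (by simp only [Left.neg_nonpos_iff]; positivity)
  linarith [hFTC a b ha hab]

lemma sub_le_neg_mul_sqrt_of_integral_le_neg_sqrt (hc : 0 ≤ c)
    (hint : ∀ a b : ℝ, IntervalIntegrable v' volume a b)
    (hFTC : ∀ a b : ℝ, t₀ ≤ a → a ≤ b → V b - V a = ∫ t in a..b, v' t)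
    (hb : ∀ᵐ t, t₀ ≤ t → v' t ≤ -(2 * c * √(V t))) {a b : ℝ} (ha : t₀ ≤ a) (hab : a ≤ b) :
    V b - V a ≤ -(2 * c * √(V b)) * (b - a) := by
  have hanti := antitoneOn_of_integral_le_neg_sqrt hc hint hFTC hb
  rw [hFTC a b ha hab]
  refine intervalIntegral.integral_le_mul_sub_of_ae_le hab (hint a b) ?_
  filter_upwards [hb] with t ht hmem
  have hVbt : √(V b) ≤ √(V t) :=
    Real.sqrt_le_sqrt (hanti (ha.trans hmem.1) (ha.trans hab) hmem.2)
  have := ht (ha.trans hmem.1)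
  nlinarith

lemma continuousOn_of_integral_eq (hint : ∀ a b : ℝ, IntervalIntegrable v' volume a b)
    (hFTC : ∀ a b : ℝ, t₀ ≤ a → a ≤ b → V b - V a = ∫ t in a..b, v' t) :
    ContinuousOn V (Ici t₀) := by
  have hprim : Continuous fun t => V t₀ + ∫ s in t₀..t, v' s :=
    continuous_const.add (intervalIntegral.continuous_primitive hint t₀)
  refine hprim.continuousOn.congr fun t ht => ?_
  linarith [hFTC t₀ t le_rfl ht]

theorem eq_zero_of_integral_le_neg_sqrt (hc : 0 < c) (hV0 : ∀ t, t₀ ≤ t → 0 ≤ V t)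
    (hint : ∀ a b : ℝ, IntervalIntegrable v' volume a b)
    (hFTC : ∀ a b : ℝ, t₀ ≤ a → a ≤ b → V b - V a = ∫ t in a..b, v' t)
    (hb : ∀ᵐ t, t₀ ≤ t → v' t ≤ -(2 * c * √(V t))) {T : ℝ} (hT : t₀ + √(V t₀) / c ≤ T) :
    V T = 0 := by
  set T₁ := t₀ + √(V t₀) / c
  have hT₁ : t₀ ≤ T₁ := le_add_of_nonneg_right (by positivity)
  have hanti := antitoneOn_of_integral_le_neg_sqrt hc.le hint hFTC hb
  suffices V T₁ = 0 from
    le_antisymm (this ▸ hanti hT₁ (hT₁.trans hT) hT) (hV0 T (hT₁.trans hT))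
  by_contra hne
  have hpos : ∀ t ∈ Icc t₀ T₁, 0 < V t := fun t ht =>
    ((hV0 _ hT₁).lt_of_ne' hne).trans_le (hanti ht.1 hT₁ ht.2)
  have hcont := continuousOn_of_integral_eq hint hFTC
  have hB : ∀ t, HasDerivAt (fun t => √(V t₀) - c * (t - t₀)) (-c) t := fun t => by
    simpa using ((hasDerivAt_id t).sub_const t₀).const_mul c |>.const_sub (√(V t₀))
  have hfence := image_le_of_liminf_slope_right_le_deriv_boundary (a := t₀) (b := T₁)
    (hcont.mono Icc_subset_Ici_self).sqrt (by simp)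
    (continuous_iff_continuousAt.2 fun t => (hB t).continuousAt).continuousOn
    (fun t _ => (hB t).hasDerivWithinAt)
    (fun x hx r hr => (eventually_slope_sqrt_lt ((hcont x hx.1).mono (Ioi_subset_Ici hx.1))
      (hpos x (Ico_subset_Icc_self hx))
      (fun z hxz => sub_le_neg_mul_sqrt_of_integral_le_neg_sqrt hc.le hint hFTC hb hx.1 hxz.le)
      hr).frequently)
    (right_mem_Icc.2 hT₁)
  have hB₁ : √(V t₀) - c * (T₁ - t₀) = 0 := by
    simp only [T₁, add_sub_cancel_left]
    field_simp
    ring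
  exact (Real.sqrt_pos.2 (hpos T₁ (right_mem_Icc.2 hT₁))).not_ge (hfence.trans hB₁.le)

end FiniteTimeExtinction

/-- Let L be the Laplacian of a connected graph and x̃ an absolutely continuous
trajectory (encoded via the fundamental theorem of calculus with an integrable derivative v'
of V = ½‖x̃‖²) with 𝟏ᵀx̃(t) = 0 for all t ≥ t₀ and V'(t) ≤ -√(2 x̃ᵀ L x̃) for a.e. t ≥ t₀.
Then x̃(t) = 0 for all t ≥ t₀ + ‖x̃(t₀)‖₂/√(λ₂(L)). -/
theorem stmt16 (n : ℕ) (G : SimpleGraph (Fin n)) [DecidableRel G.Adj] (hG : G.Connected)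
    (hL : (G.lapMatrix ℝ).IsHermitian)
    (t₀ : ℝ) (xt : ℝ → Fin n → ℝ) (v' : ℝ → ℝ)
    (hsum : ∀ t, t₀ ≤ t → ∑ i, xt t i = 0)
    (hint : ∀ a b : ℝ, IntervalIntegrable v' volume a b)
    (hFTC : ∀ a b : ℝ, t₀ ≤ a → a ≤ b →
      ((1:ℝ)/2) * ∑ i, (xt b i)^2 - ((1:ℝ)/2) * ∑ i, (xt a i)^2 = ∫ t in a..b, v' t)
    (hbound : ∀ᵐ t ∂volume, t₀ ≤ t →
      v' t ≤ -Real.sqrt (2 * (xt t ⬝ᵥ (G.lapMatrix ℝ *ᵥ xt t)))) :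
    ∀ t, t₀ + Real.sqrt (∑ i, (xt t₀ i)^2) / Real.sqrt (lambda2 hL) ≤ t → xt t = 0 := by
  intro t ht
  have ht₀ : t₀ ≤ t := le_of_add_le_of_nonneg_left ht (by positivity)
  obtain hn | hn := subsingleton_or_nontrivial (Fin n)
  · exact funext fun i => (Fintype.sum_subsingleton (xt t) i).symm.trans (hsum t ht₀)
  have hsq : ∀ x : Fin n → ℝ, ∑ i, x i ^ 2 = x ⬝ᵥ x := fun x => by simp only [dotProduct, sq]
  have hlam : 0 < lambda2 hL :=
    hL.lambda2_pos (G.posSemidef_lapMatrix ℝ) (G.lapMatrix_ne_zero hG.preconnected)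
  have hb : ∀ᵐ s, t₀ ≤ s → v' s ≤ -(2 * √(lambda2 hL) * √((1 / 2) * ∑ i, xt s i ^ 2)) := by
    filter_upwards [hbound] with s hs hts
    have hray : lambda2 hL * ∑ i, xt s i ^ 2 ≤ xt s ⬝ᵥ (G.lapMatrix ℝ *ᵥ xt s) := by
      rw [hsq]
      exact hL.lambda2_mul_dotProduct_self_le
        fun y hy => G.dotProduct_eq_zero_of_lapMatrix_mulVec_eq_zero hG (hsum s hts) hy
    have hquad : 0 ≤ lambda2 hL * ∑ i, xt s i ^ 2 := mul_nonneg hlam.le (by positivity)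
    refine (hs hts).trans (neg_le_neg ((Real.le_sqrt (by positivity) (by linarith)).2 ?_))
    rw [mul_pow, mul_pow, Real.sq_sqrt hlam.le, Real.sq_sqrt (by positivity)]
    linarith
  -- the comparison argument gives the sharper extinction time `t₀ + ‖x̃(t₀)‖ / √(2λ₂)`
  have hV := eq_zero_of_integral_le_neg_sqrt (V := fun s => 1 / 2 * ∑ i, xt s i ^ 2)
    (Real.sqrt_pos.2 hlam) (fun s _ => by positivity) hint hFTC hb (T := t)
    (ht.trans' (by gcongr; linarith [(by positivity : (0 : ℝ) ≤ ∑ i, xt t₀ i ^ 2)]))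
  rw [hsq] at hV
  exact dotProduct_self_eq_zero.1 (by linarith)
end
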